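/- If α, β > 0 satisfy f_s(0,α) = f_d(0,α,β) ≥ 0, then max_{u∈[−1,1]} f_s(u,α) = max_{u∈[−1,1]} f_d(u,α,β) = f_s(0,α). -/

import Mathlib

noncomputable section

open Real Set

/-- A vector in Euclidean 3-space. -/
def v3 (x y z : ℝ) : EuclideanSpace ℝ (Fin 3) := WithLp.toLp 2 ![x, y, z]

/-- Quadratic Bernstein polynomials (parametrized on `[-1,1]`). -/
def bern (i : Fin 3) (u : ℝ) : ℝ :=
  (Nat.choose 2 (i : ℕ)) * ((1 + u) / 2) ^ (i : ℕ) * ((1 - u) / 2) ^ (2 - (i : ℕ))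

/-- Control points `ctrl a α β i j = b i j` of the tensor product quadratic Bézier patch:
`b₀₀ = (-a,-a,√(1-2a²))`, `b₂₀ = (a,-a,√(1-2a²))`, `b₀₂ = (-a,a,√(1-2a²))`,
`b₂₂ = (a,a,√(1-2a²))`, `b₁₀ = α(b₀₀+b₂₀)`, `b₀₁ = α(b₀₀+b₀₂)`, `b₂₁ = α(b₂₀+b₂₂)`,
`b₁₂ = α(b₀₂+b₂₂)`, `b₁₁ = β(0,0,1)`. The first index is the `u`-index. -/
def ctrl (a α β : ℝ) : Fin 3 → Fin 3 → EuclideanSpace ℝ (Fin 3) :=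
  ![![v3 (-a) (-a) (Real.sqrt (1 - 2*a^2)),
     α • (v3 (-a) (-a) (Real.sqrt (1 - 2*a^2)) + v3 (-a) a (Real.sqrt (1 - 2*a^2))),
     v3 (-a) a (Real.sqrt (1 - 2*a^2))],
    ![α • (v3 (-a) (-a) (Real.sqrt (1 - 2*a^2)) + v3 a (-a) (Real.sqrt (1 - 2*a^2))),
     β • v3 0 0 1,
     α • (v3 (-a) a (Real.sqrt (1 - 2*a^2)) + v3 a a (Real.sqrt (1 - 2*a^2)))],
    ![v3 a (-a) (Real.sqrt (1 - 2*a^2)),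
     α • (v3 a (-a) (Real.sqrt (1 - 2*a^2)) + v3 a a (Real.sqrt (1 - 2*a^2))),
     v3 a a (Real.sqrt (1 - 2*a^2))]]

/-- The tensor product quadratic Bézier patch
`p(u,v) = ∑ᵢ ∑ⱼ Bᵢ²(u) Bⱼ²(v) bᵢⱼ`. -/
def bez (a α β u v : ℝ) : EuclideanSpace ℝ (Fin 3) :=
  ∑ i : Fin 3, ∑ j : Fin 3, (bern i u * bern j v) • ctrl a α β i j

/-- The simplified radial error `f(u,v,α,β) = ‖p(u,v)‖² - 1`. -/
def f (a α β u v : ℝ) : ℝ := ‖bez a α β u v‖ ^ 2 - 1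

/-- `f_s(u,α) = f(u,-1,α,β)`; this does not depend on `β` (the control point `b₁₁`
does not contribute on the side `v = -1`), so we take `β = 0`. -/
def fs (a α u : ℝ) : ℝ := f a α 0 u (-1)

/-- `f_d(u,α,β) = f(u,u,α,β)`, the error along the diagonal. -/
def fd (a α β u : ℝ) : ℝ := f a α β u u

/-! Write `t = u²` and `K = 1/2 + α`. On the side `v = -1` and on the diagonal the patch is
built from the linear Bernstein form `g = (1 - t) K + t` and, for the height on the diagonal, the
quadratic Bernstein form `h = (1 - t)² h₀ + 2t(1 - t) s K + t² s` in `t ∈ [0,1]`, where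
`s = √(1 - 2a²)` and `h₀ = h(0)`. Convexity of the square bounds `g²` and `h²` by the same
combinations of the squared coefficients. As `2a² + s² = 1`, and `f_d(0) = f_s(0)` means
`h₀² = (1 - a²) K²`, these bounds collapse to `f_s(u) ≤ (1 - u²) f_s(0)` and
`f_d(u) ≤ (1 - u⁴) f_s(0)`, both at most `f_s(0)` when `f_s(0) ≥ 0`. -/

lemma sq_add_le_of_add_eq_one {p q x y : ℝ} (hp : 0 ≤ p) (hq : 0 ≤ q) (hpq : p + q = 1) :
    (p * x + q * y) ^ 2 ≤ p * x ^ 2 + q * y ^ 2 := by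
  obtain rfl : q = 1 - p := by linarith
  linear_combination mul_nonneg (mul_nonneg hp hq) (sq_nonneg (x - y))

lemma sq_add_add_le_of_add_add_eq_one {p q r x y z : ℝ} (hp : 0 ≤ p) (hq : 0 ≤ q) (hr : 0 ≤ r)
    (hpqr : p + q + r = 1) :
    (p * x + q * y + r * z) ^ 2 ≤ p * x ^ 2 + q * y ^ 2 + r * z ^ 2 := by
  obtain rfl : r = 1 - p - q := by linarith
  linear_combination mul_nonneg (mul_nonneg hp hq) (sq_nonneg (x - y))
    + mul_nonneg (mul_nonneg hp hr) (sq_nonneg (x - z))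
    + mul_nonneg (mul_nonneg hq hr) (sq_nonneg (y - z))

lemma csSup_image_eq_of_isMaxOn {X Y : Type*} [ConditionallyCompleteLattice Y] {g : X → Y}
    {S : Set X} {x : X} (hx : x ∈ S) (h : IsMaxOn g S x) : sSup (g '' S) = g x :=
  IsGreatest.csSup_eq ⟨mem_image_of_mem g hx, forall_mem_image.2 (isMaxOn_iff.1 h)⟩

lemma norm_v3_sq (x y z : ℝ) : ‖v3 x y z‖ ^ 2 = x ^ 2 + y ^ 2 + z ^ 2 := by
  simp [v3, EuclideanSpace.norm_sq_eq, Fin.sum_univ_three]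

section

variable (a α β u : ℝ)

lemma bez_neg_one : bez a α β u (-1) = v3 (a * u) (-a * ((1 - u ^ 2) * (1 / 2 + α) + u ^ 2))
    (√(1 - 2 * a ^ 2) * ((1 - u ^ 2) * (1 / 2 + α) + u ^ 2)) := by
  ext k
  fin_cases k <;>
  · simp [bez, ctrl, v3, bern, Fin.sum_univ_three]
    ring

lemma bez_diag : bez a α β u u =
    v3 (a * u * ((1 - u ^ 2) * (1 / 2 + α) + u ^ 2)) (a * u * ((1 - u ^ 2) * (1 / 2 + α) + u ^ 2))
      ((1 - u ^ 2) ^ 2 * ((√(1 - 2 * a ^ 2) + β) / 4 + √(1 - 2 * a ^ 2) * α)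
        + 2 * u ^ 2 * (1 - u ^ 2) * (√(1 - 2 * a ^ 2) * (1 / 2 + α))
        + u ^ 4 * √(1 - 2 * a ^ 2)) := by
  ext k
  fin_cases k <;>
  · simp [bez, ctrl, v3, bern, Fin.sum_univ_three]
    ring

lemma fs_eq (h2a : 2 * a ^ 2 ≤ 1) :
    fs a α u = a ^ 2 * u ^ 2 + (1 - a ^ 2) * ((1 - u ^ 2) * (1 / 2 + α) + u ^ 2) ^ 2 - 1 := by
  rw [fs, f, bez_neg_one, norm_v3_sq, mul_pow, neg_mul, neg_sq, mul_pow (√_), mul_pow,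
    sq_sqrt (by linarith)]
  ring

lemma fd_eq : fd a α β u = 2 * a ^ 2 * u ^ 2 * ((1 - u ^ 2) * (1 / 2 + α) + u ^ 2) ^ 2
    + ((1 - u ^ 2) ^ 2 * ((√(1 - 2 * a ^ 2) + β) / 4 + √(1 - 2 * a ^ 2) * α)
        + 2 * u ^ 2 * (1 - u ^ 2) * (√(1 - 2 * a ^ 2) * (1 / 2 + α)) + u ^ 4 * √(1 - 2 * a ^ 2)) ^ 2
    - 1 := by
  rw [fd, f, bez_diag, norm_v3_sq]
  ring

variable {a α β u}

lemma fs_le_mul_fs_zero (h2a : 2 * a ^ 2 ≤ 1) (hu : u ^ 2 ≤ 1) :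
    fs a α u ≤ (1 - u ^ 2) * fs a α 0 := by
  have hg := sq_add_le_of_add_eq_one (x := 1 / 2 + α) (y := 1) (sub_nonneg.2 hu) (sq_nonneg u)
    (sub_add_cancel 1 (u ^ 2))
  rw [fs_eq a α u h2a, fs_eq a α 0 h2a]
  linear_combination mul_le_mul_of_nonneg_left hg (by linarith : 0 ≤ 1 - a ^ 2)

lemma fd_le_mul_fs_zero (h2a : 2 * a ^ 2 ≤ 1) (heq : fs a α 0 = fd a α β 0) (hu : u ^ 2 ≤ 1) :
    fd a α β u ≤ (1 - u ^ 4) * fs a α 0 := by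
  rw [fs_eq a α 0 h2a, fd_eq] at heq ⊢
  set s := √(1 - 2 * a ^ 2)
  set h₀ := (s + β) / 4 + s * α
  have hs : s ^ 2 = 1 - 2 * a ^ 2 := sq_sqrt (by linarith)
  have hh₀ : h₀ ^ 2 = (1 - a ^ 2) * (1 / 2 + α) ^ 2 := by linear_combination -heq
  have hg := sq_add_le_of_add_eq_one (x := 1 / 2 + α) (y := 1) (sub_nonneg.2 hu) (sq_nonneg u)
    (sub_add_cancel 1 (u ^ 2))
  have hh := sq_add_add_le_of_add_add_eq_one (x := h₀) (y := s * (1 / 2 + α)) (z := s)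
    (sq_nonneg (1 - u ^ 2)) (by nlinarith : 0 ≤ 2 * u ^ 2 * (1 - u ^ 2))
    (by positivity : 0 ≤ u ^ 4) (by ring)
  linear_combination hh + (2 * a ^ 2 * u ^ 2) * hg
    + (2 * u ^ 2 * (1 - u ^ 2) * (1 / 2 + α) ^ 2 + u ^ 4) * hs + (1 - u ^ 2) ^ 2 * hh₀

end

theorem max_at_zero_general (a : ℝ) (ha : 0 < a) (ha' : a ≤ Real.sqrt 2 / 2)
    (α β : ℝ) (heq : fs a α 0 = fd a α β 0) (hpos : 0 ≤ fs a α 0) :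
    sSup ((fun u => fs a α u) '' Set.Icc (-1:ℝ) 1) = fs a α 0 ∧
    sSup ((fun u => fd a α β u) '' Set.Icc (-1:ℝ) 1) = fs a α 0 := by
  have h2a : 2 * a ^ 2 ≤ 1 := by
    have := pow_le_pow_left₀ ha.le ha' 2
    rw [div_pow, sq_sqrt zero_le_two] at this
    linarith
  have hu : ∀ u ∈ Icc (-1 : ℝ) 1, u ^ 2 ≤ 1 := fun u hu =>
    (sq_le_one_iff_abs_le_one u).2 (abs_le.2 hu)
  have h0 : (0 : ℝ) ∈ Icc (-1 : ℝ) 1 := by norm_num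
  refine ⟨csSup_image_eq_of_isMaxOn h0 fun u hu' => ?_,
    heq ▸ csSup_image_eq_of_isMaxOn h0 fun u hu' => ?_⟩
  · calc fs a α u ≤ (1 - u ^ 2) * fs a α 0 := fs_le_mul_fs_zero h2a (hu u hu')
      _ ≤ fs a α 0 := mul_le_of_le_one_left hpos (sub_le_self 1 (by positivity))
  · calc fd a α β u ≤ (1 - u ^ 4) * fs a α 0 := fd_le_mul_fs_zero h2a heq (hu u hu')
      _ ≤ fd a α β 0 := heq ▸ mul_le_of_le_one_left hpos (sub_le_self 1 (by positivity))

/-- If `α, β > 0` satisfy `f_s(0,α) = f_d(0,α,β) ≥ 0`, then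
`max_{[-1,1]} f_s(·,α) = max_{[-1,1]} f_d(·,α,β) = f_s(0,α)`. -/
theorem max_at_zero (a : ℝ) (ha : 0 < a) (ha' : a ≤ Real.sqrt 2 / 2)
    (α β : ℝ) (hα : 0 < α) (hβ : 0 < β)
    (heq : fs a α 0 = fd a α β 0) (hpos : 0 ≤ fs a α 0) :
    sSup ((fun u => fs a α u) '' Set.Icc (-1:ℝ) 1) = fs a α 0 ∧
    sSup ((fun u => fd a α β u) '' Set.Icc (-1:ℝ) 1) = fs a α 0 :=
  max_at_zero_general a ha ha' α β heq hpos

end
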